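/- Let A be a ring, z an element of the center of A, and M, N two A-modules. Suppose z acts on M by multiplication by a scalar a ∈ A and on N by multiplication by a scalar b ∈ A (with a, b central), and suppose b - a is a unit of A. Then Ext^n_A(M, N) = 0 for all n ≥ 0. -/

import Mathlib

open CategoryTheory

variable {A : Type} [Ring A]

/-- Multiplication by a central element, as an endomorphism in `ModuleCat A`. -/
def centralSmul (c : A) (hc : c ∈ Set.center A) (X : ModuleCat A) : X ⟶ X := ModuleCat.ofHom
  { toFun := fun x => c • x
    map_add' := fun x y => smul_add c x y
    map_smul' := fun s x => by
      simp only [RingHom.id_apply, ← mul_smul]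
      rw [hc.comm s] }

@[simp] lemma centralSmul_apply (c : A) (hc : c ∈ Set.center A) (X : ModuleCat A) (x : X) :
    centralSmul c hc X x = c • x := rfl

lemma centralSmul_comm (c : A) (hc : c ∈ Set.center A) {X Y : ModuleCat A} (f : X ⟶ Y) :
    centralSmul c hc X ≫ f = f ≫ centralSmul c hc Y := by
  ext x
  simp only [ConcreteCategory.comp_apply, Function.comp_apply, centralSmul_apply, map_smul]

noncomputable section

/-- Multiplication by a central element as a chain map on a complex. -/
def centralSmulComplex (c : A) (hc : c ∈ Set.center A) (P : ChainComplex (ModuleCat A) ℕ) :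
    P ⟶ P where
  f i := centralSmul c hc (P.X i)
  comm' i j _ := centralSmul_comm c hc (P.d i j)

/-- If a central element kills `Mc`, its action on a projective resolution is null-homotopic. -/
def centralSmulNullHomotopy (c : A) (hc : c ∈ Set.center A) {Mc : ModuleCat A}
    (hcM : ∀ m : Mc, c • m = 0) (P : ProjectiveResolution Mc) :
    Homotopy (centralSmulComplex c hc P.complex) 0 := by
  apply ProjectiveResolution.liftHomotopyZero
  apply HomologicalComplex.to_single_hom_ext
  ext x
  simp only [HomologicalComplex.comp_f, ConcreteCategory.comp_apply, Function.comp_apply,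
    HomologicalComplex.zero_f, LinearMap.zero_apply]
  show P.π.f 0 ((centralSmulComplex c hc P.complex).f 0 x) = 0
  have : (centralSmulComplex c hc P.complex).f 0 x = c • x := rfl
  rw [this, map_smul]
  exact hcM _

lemma key (Mc Nc : ModuleCat A) (c u v : A)
    (hc : c ∈ Set.center A) (hv : v ∈ Set.center A)
    (hcM : ∀ m : Mc, c • m = 0) (hcN : ∀ y : Nc, c • y = u • y)
    (hvu : ∀ y : Nc, v • u • y = y) (n : ℕ) :
    Subsingleton (((Ext ℤ (ModuleCat A) n).obj (Opposite.op Mc)).obj Nc) := by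
  obtain ⟨P⟩ := (HasProjectiveResolution.out (Z := Mc))
  set K := P.complex.linearYonedaObj ℤ Nc with hK
  set g := centralSmulNullHomotopy c hc hcM P with hg
  -- homotopy operator on K
  let thom : ∀ j : ℕ, (K.X (j+1) ⟶ K.X j) := fun j =>
    ModuleCat.ofHom ((Linear.rightComp ℤ (P.complex.X j) (centralSmul v hv Nc)).comp
      (Linear.leftComp ℤ Nc (g.hom j (j+1))))
  -- the key elementwise computation
  have keycomp : ∀ (i : ℕ) (f : P.complex.X i ⟶ Nc) (x : P.complex.X i),
      v • (f ((centralSmulComplex c hc P.complex).f i x)) = f x := by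
    intro i f x
    have : (centralSmulComplex c hc P.complex).f i x = c • x := rfl
    rw [this, map_smul, hcN, hvu]
  have t : Homotopy (𝟙 K) 0 :=
  { hom := fun i j => if h : j + 1 = i then eqToHom (congrArg K.X h.symm) ≫ thom j else 0
    zero := fun i j hns => dif_neg fun h => hns (by simpa using h)
    comm := fun i => by
      have hrel : (ComplexShape.up ℕ).Rel i (i+1) := by simp
      rw [dNext_eq _ hrel]
      match i with
      | 0 =>
        rw [prevD_eq_zero]
        · simp only [dif_pos rfl, eqToHom_refl, Category.id_comp, dite_true,
            HomologicalComplex.zero_f, add_zero]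
          refine ModuleCat.hom_ext (LinearMap.ext fun (f : P.complex.X 0 ⟶ Nc) => ModuleCat.hom_ext (LinearMap.ext fun x => ?_))
          have gc := g.comm 0
          rw [prevD_eq (f := g.hom) (show (ComplexShape.down ℕ).Rel 1 0 by simp),
            dNext_eq_zero (f := g.hom) 0 (by simp),
            HomologicalComplex.zero_f, zero_add, add_zero] at gc
          have hx : P.complex.d 1 0 (g.hom 0 1 x)
              = (centralSmulComplex c hc P.complex).f 0 x :=
            (LinearMap.congr_fun (congrArg ModuleCat.Hom.hom gc) x).symm
          show f x = v • f (P.complex.d 1 0 (g.hom 0 1 x))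
          rw [hx, keycomp]
        · intro h
          rw [ComplexShape.up_Rel] at h
          omega
      | (Nat.succ i) =>
        rw [prevD_eq _ (show (ComplexShape.up ℕ).Rel i (i+1) by simp)]
        simp only [dif_pos rfl, eqToHom_refl, Category.id_comp, dite_true,
          HomologicalComplex.zero_f, add_zero]
        refine ModuleCat.hom_ext (LinearMap.ext fun (f : P.complex.X (i+1) ⟶ Nc) => ModuleCat.hom_ext (LinearMap.ext fun x => ?_))
        have gc := g.comm (i+1)
        rw [prevD_eq (f := g.hom) (show (ComplexShape.down ℕ).Rel (i+2) (i+1) by simp),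
          dNext_eq (f := g.hom) (show (ComplexShape.down ℕ).Rel (i+1) i by simp),
          HomologicalComplex.zero_f, add_zero] at gc
        have hx : g.hom i (i+1) (P.complex.d (i+1) i x)
              + P.complex.d (i+2) (i+1) (g.hom (i+1) (i+2) x)
            = (centralSmulComplex c hc P.complex).f (i+1) x :=
          (LinearMap.congr_fun (congrArg ModuleCat.Hom.hom gc) x).symm
        have hx' : P.complex.d (i+2) (i+1) (g.hom (i+1) (i+2) x)
              + g.hom i (i+1) (P.complex.d (i+1) i x)
            = (centralSmulComplex c hc P.complex).f (i+1) x := (add_comm _ _).trans hx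
        show f x = v • f (P.complex.d (i+2) (i+1) (g.hom (i+1) (i+2) x))
            + v • f (g.hom i (i+1) (P.complex.d (i+1) i x))
        rw [← smul_add, ← map_add, hx', keycomp]
        }
  have h1 : (𝟙 (K.homology n) : K.homology n ⟶ K.homology n) = 0 := by
    have := t.homologyMap_eq n
    rwa [HomologicalComplex.homologyMap_id, HomologicalComplex.homologyMap_zero] at this
  have hzero : ∀ w : (K.homology n), w = 0 := by
    intro w
    calc w = (𝟙 (K.homology n) : K.homology n ⟶ K.homology n) w := rfl
    _ = (0 : K.homology n ⟶ K.homology n) w := by rw [h1]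
    _ = 0 := rfl
  constructor
  intro x y
  let e := P.isoExt (R := ℤ) n Nc
  have hinj : ∀ w, e.inv (e.hom w) = w := by
    intro w
    have h2 : (e.hom ≫ e.inv) w = w := by rw [e.hom_inv_id]; rfl
    exact h2
  rw [← hinj x, ← hinj y, hzero (e.hom x), hzero (e.hom y)]

end

/-- If a central element `z` of `A` acts by a scalar `a` on `M` and by `b` on `N`,
with `b - a` a unit, then `Ext_A^n(M, N) = 0` for all `n`. -/
theorem stmt_1 {A : Type} [Ring A] (z : A) (hz : z ∈ Set.center A)
    (M N : Type) [AddCommGroup M] [AddCommGroup N] [Module A M] [Module A N]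
    (a b : A) (ha : a ∈ Set.center A) (hb : b ∈ Set.center A)
    (hM : ∀ m : M, z • m = a • m) (hN : ∀ x : N, z • x = b • x)
    (hu : IsUnit (b - a)) (n : ℕ) :
    Subsingleton (((Ext ℤ (ModuleCat A) n).obj
      (Opposite.op (ModuleCat.of A M))).obj (ModuleCat.of A N)) := by
  have hzc : ∀ g : A, g * z = z * g := fun g => Semigroup.mem_center_iff.mp hz g
  have hac : ∀ g : A, g * a = a * g := fun g => Semigroup.mem_center_iff.mp ha g
  have hbc : ∀ g : A, g * b = b * g := fun g => Semigroup.mem_center_iff.mp hb g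
  have hc : z - a ∈ Set.center A := by
    rw [Semigroup.mem_center_iff]
    intro s
    rw [mul_sub, sub_mul, hzc, hac]
  have hv : (↑hu.unit⁻¹ : A) ∈ Set.center A := by
    rw [Semigroup.mem_center_iff]
    intro s
    symm
    have hw : (b - a) * s = s * (b - a) := by rw [mul_sub, sub_mul, hac, hbc]
    have h1 : (↑hu.unit⁻¹ : A) * (b - a) = 1 := hu.val_inv_mul
    have h2 : (b - a) * (↑hu.unit⁻¹ : A) = 1 := hu.mul_val_inv
    calc (↑hu.unit⁻¹ : A) * s
        = ↑hu.unit⁻¹ * (s * ((b-a) * ↑hu.unit⁻¹)) := by rw [h2, mul_one]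
      _ = ↑hu.unit⁻¹ * ((b-a) * (s * ↑hu.unit⁻¹)) := by rw [← mul_assoc s, ← hw, mul_assoc]
      _ = (↑hu.unit⁻¹ * (b-a)) * (s * ↑hu.unit⁻¹) := by rw [mul_assoc]
      _ = s * ↑hu.unit⁻¹ := by rw [h1, one_mul]
  exact key (ModuleCat.of A M) (ModuleCat.of A N) (z - a) (b - a) (↑hu.unit⁻¹) hc hv
    (fun m => by rw [sub_smul, hM, sub_self])
    (fun y => by rw [sub_smul, sub_smul, hN])
    (fun y => by rw [← mul_smul, hu.val_inv_mul, one_smul])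
    n
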